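/- Let t, j ∈ ℕ with j ≤ t, let σ > 0 and let α > 0 satisfy α(t+1) > 2. Then σ² + ∫_σ^∞ 2x · (σ/x)^{α(j+1)} · (2(σ/x)^α − (σ/x)^{2α})^{t−j} dx = ∑_{k=0}^{t−j} C(t−j, k) · 2^k · (−1)^{t−j−k} · σ² · α(2t+1−j−k)/(α(2t+1−j−k) − 2), where C(n,k) denotes the binomial coefficient. -/

import Mathlib

/-!
Expanding `(2u − u²)^{t−j}` with `u = (σ/x)^α` by the binomial theorem writes the integrand as a
combination `∑ c_k · 2x(σ/x)^{p_k}` of Pareto tail integrands with exponents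
`p_k = α(2t+1−j−k) ≥ α(t+1) > 2`. Each satisfies `σ² + ∫_σ^∞ 2x(σ/x)^p dx = σ² p/(p−2)`, and the
weights `c_k = C(t−j,k) 2^k (−1)^{t−j−k}` sum to `(2 − 1)^{t−j} = 1`, so the `σ²` distributes
over the sum.
-/

open Real MeasureTheory Set Finset

theorem sum_choose_mul_two_pow_mul_neg_one_pow (m : ℕ) :
    ∑ k ∈ range (m + 1), (m.choose k : ℝ) * 2 ^ k * (-1) ^ (m - k) = 1 := by
  calc ∑ k ∈ range (m + 1), (m.choose k : ℝ) * 2 ^ k * (-1) ^ (m - k)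
      = ((2 : ℝ) + -1) ^ m := by
        rw [add_pow]; exact sum_congr rfl fun k _ => by ring
    _ = 1 := by norm_num

theorem two_mul_sub_sq_pow {R : Type*} [CommRing R] (u : R) (m : ℕ) :
    (2 * u - u ^ 2) ^ m
      = ∑ k ∈ range (m + 1), (m.choose k : R) * 2 ^ k * (-1) ^ (m - k) * u ^ (2 * m - k) := by
  rw [sub_eq_add_neg, add_pow]
  refine sum_congr rfl fun k hk => ?_
  have hkm : 2 * m - k = k + 2 * (m - k) := by
    have := mem_range_succ_iff.mp hk; omega
  rw [hkm, neg_pow, pow_add, pow_mul, mul_pow]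
  ring

theorem rpow_mul_two_mul_rpow_sub_rpow_pow {y : ℝ} (hy : 0 < y) (a b : ℝ) (m : ℕ) :
    y ^ a * (2 * y ^ b - y ^ (2 * b)) ^ m
      = ∑ k ∈ range (m + 1),
          (m.choose k : ℝ) * 2 ^ k * (-1) ^ (m - k) * y ^ (a + b * ((2 * m - k : ℕ) : ℝ)) := by
  rw [two_mul b, rpow_add hy, ← sq, two_mul_sub_sq_pow, mul_sum]
  refine sum_congr rfl fun k _ => ?_
  rw [rpow_add hy, rpow_mul_natCast hy.le]
  ring

theorem eqOn_two_mul_mul_div_rpow {σ : ℝ} (hσ : 0 < σ) (p : ℝ) :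
    EqOn (fun x => 2 * x * (σ / x) ^ p) (fun x => 2 * σ ^ p * x ^ (1 - p)) (Ioi σ) := by
  intro x hx
  have hx₀ : 0 < x := hσ.trans hx
  simp only
  rw [div_rpow hσ.le hx₀.le, rpow_sub hx₀, rpow_one]
  field_simp

theorem integrableOn_Ioi_two_mul_mul_div_rpow {σ p : ℝ} (hσ : 0 < σ) (hp : 2 < p) :
    IntegrableOn (fun x => 2 * x * (σ / x) ^ p) (Ioi σ) :=
  IntegrableOn.congr_fun
    ((integrableOn_Ioi_rpow_of_lt (a := 1 - p) (by linarith) hσ).const_mul (2 * σ ^ p))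
    (eqOn_two_mul_mul_div_rpow hσ p).symm measurableSet_Ioi

/-- `E[V²] = ∫_0^∞ 2x P(V > x) dx` for `V ~ Pareto(σ, p)`, with the integral split at `σ`. -/
theorem sq_add_integral_Ioi_two_mul_mul_div_rpow {σ p : ℝ} (hσ : 0 < σ) (hp : 2 < p) :
    σ ^ 2 + ∫ x in Ioi σ, 2 * x * (σ / x) ^ p = σ ^ 2 * p / (p - 2) := by
  rw [setIntegral_congr_fun measurableSet_Ioi (eqOn_two_mul_mul_div_rpow hσ p),
    integral_const_mul, integral_Ioi_rpow_of_lt (by linarith) hσ, show 1 - p + 1 = 2 - p by ring]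
  have hσp : σ ^ p * σ ^ (2 - p) = σ ^ 2 := by rw [← rpow_add hσ, add_sub_cancel, rpow_two]
  have hp₂ : p - 2 ≠ 0 := by linarith
  calc σ ^ 2 + 2 * σ ^ p * (-σ ^ (2 - p) / (2 - p))
      = σ ^ 2 + 2 * (σ ^ p * σ ^ (2 - p)) / (p - 2) := by
        rw [neg_div, ← div_neg, neg_sub]; ring
    _ = σ ^ 2 * p / (p - 2) := by
        rw [hσp]; field_simp; ring

theorem sq_add_integral_Ioi_sum_mul {ι : Type*} (s : Finset ι) (c p : ι → ℝ)
    (hc : ∑ i ∈ s, c i = 1) {σ : ℝ} (hσ : 0 < σ) (hp : ∀ i ∈ s, 2 < p i) :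
    σ ^ 2 + ∫ x in Ioi σ, ∑ i ∈ s, c i * (2 * x * (σ / x) ^ p i)
      = ∑ i ∈ s, c i * (σ ^ 2 * p i / (p i - 2)) := by
  rw [integral_finsetSum s fun i hi =>
      (integrableOn_Ioi_two_mul_mul_div_rpow hσ (hp i hi)).const_mul (c i)]
  calc σ ^ 2 + ∑ i ∈ s, ∫ x in Ioi σ, c i * (2 * x * (σ / x) ^ p i)
      = ∑ i ∈ s, c i * (σ ^ 2 + ∫ x in Ioi σ, 2 * x * (σ / x) ^ p i) := by
        simp_rw [integral_const_mul, mul_add, sum_add_distrib, ← sum_mul, hc, one_mul]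
    _ = ∑ i ∈ s, c i * (σ ^ 2 * p i / (p i - 2)) :=
        sum_congr rfl fun i hi => by rw [sq_add_integral_Ioi_two_mul_mul_div_rpow hσ (hp i hi)]

/-- Second-moment formula (equation (20)) for the type-`j` request service
time with `Pareto(σ, α)` servers:
`σ² + ∫_σ^∞ 2x (σ/x)^{α(j+1)} (2(σ/x)^α − (σ/x)^{2α})^{t−j} dx
  = ∑_{k=0}^{t−j} C(t−j,k) 2^k (−1)^{t−j−k} σ² α(2t+1−j−k)/(α(2t+1−j−k) − 2)`. -/
theorem pareto_type_j_second_moment_formula (t j : ℕ) (hjt : j ≤ t)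
    (σ α : ℝ) (hσ : 0 < σ) (hα : 0 < α) (hα2 : α * (t + 1) > 2) :
    σ ^ 2 + ∫ x in Set.Ioi σ,
        2 * x * ((σ / x) ^ (α * (j + 1)) *
          (2 * (σ / x) ^ α - (σ / x) ^ (2 * α)) ^ (t - j))
      = ∑ k ∈ Finset.range (t - j + 1),
          (t - j).choose k * 2 ^ k * (-1 : ℝ) ^ (t - j - k) * σ ^ 2 *
            (α * ((2 * t + 1 - j - k : ℕ) : ℝ)) /
              (α * ((2 * t + 1 - j - k : ℕ) : ℝ) - 2) := by
  set m := t - j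
  set p : ℕ → ℝ := fun k => α * ((2 * t + 1 - j - k : ℕ) : ℝ)
  have hp : ∀ k ∈ range (m + 1), 2 < p k := fun k hk => by
    have : t + 1 ≤ 2 * t + 1 - j - k := by have := mem_range_succ_iff.mp hk; omega
    exact hα2.trans_le (mul_le_mul_of_nonneg_left (by exact_mod_cast this) hα.le)
  have hexp : ∀ k ∈ range (m + 1), α * (j + 1) + α * ((2 * m - k : ℕ) : ℝ) = p k := fun k hk => by
    have : 2 * t + 1 - j - k = (j + 1) + (2 * m - k) := by
      have := mem_range_succ_iff.mp hk; omega
    simp only [p, this]; push_cast; ring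
  have hexpand : EqOn
      (fun x => 2 * x * ((σ / x) ^ (α * (j + 1)) * (2 * (σ / x) ^ α - (σ / x) ^ (2 * α)) ^ m))
      (fun x => ∑ k ∈ range (m + 1),
        (m.choose k : ℝ) * 2 ^ k * (-1) ^ (m - k) * (2 * x * (σ / x) ^ p k)) (Ioi σ) :=
    fun x hx => by
      simp only
      rw [rpow_mul_two_mul_rpow_sub_rpow_pow (div_pos hσ (hσ.trans hx)), mul_sum]
      exact sum_congr rfl fun k hk => by rw [hexp k hk]; ring
  rw [setIntegral_congr_fun measurableSet_Ioi hexpand,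
    sq_add_integral_Ioi_sum_mul _ _ p (sum_choose_mul_two_pow_mul_neg_one_pow m) hσ hp]
  exact sum_congr rfl fun k _ => by ring
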